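/- Let G be an ADMG with vertex set V, let Y, Z, W, X be disjoint subsets of V, let T ⊆ W and W_1 = W \ T. Suppose (Y(x,z) ⊥ Z(x,z) | W(x,z))_{G(x,z)} holds in the SWIG G(x,z). Then (Y(x,t) ⊥ T(x,t) | Z(x,t) ∪ W_1(x,t))_{G(x,t)} holds in the SWIG G(x,t) if and only if (Y(x,z,t) ⊥ T(x,z,t) | W_1(x,z,t))_{G(x,z,t)} holds in the SWIG G(x,z,t). -/

import Mathlib

/-! ### Mixed graphs, walks, m-separation, SWIGs -/

/-- An acyclic directed mixed graph (directedness data; acyclicity is stated separately). -/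
structure MixedGraph (V : Type) where
  /-- directed edges `i → j` -/
  dir : V → V → Prop
  /-- bidirected edges `i ↔ j` -/
  bi : V → V → Prop
  bi_symm : ∀ i j, bi i j → bi j i

namespace MixedGraph

variable {V : Type}

/-- There is no directed cycle. -/
def Acyclic (G : MixedGraph V) : Prop := ∀ v, ¬ Relation.TransGen G.dir v v

/-- `v` is a descendant of `s` (reflexively). -/
def Desc (G : MixedGraph V) (s v : V) : Prop := Relation.ReflTransGen G.dir s v

/-- The set of ancestors of the set `W` (including `W` itself). -/
def AncSet (G : MixedGraph V) (W : Set V) : Set V := {v | ∃ w ∈ W, Relation.ReflTransGen G.dir v w}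

/-- There is an edge between `a` and `b` carrying an arrowhead at `a` iff `ha = true`
and an arrowhead at `b` iff `hb = true`. -/
def Step (G : MixedGraph V) (a b : V) (ha hb : Bool) : Prop :=
  match ha, hb with
  | false, true => G.dir a b
  | true, false => G.dir b a
  | true, true => G.bi a b
  | false, false => False

/-- Walks (with at least one edge) in a mixed graph, remembering arrowhead marks. -/
inductive Walk (G : MixedGraph V) : V → V → Type where
  | single {a b : V} (ha hb : Bool) (h : G.Step a b ha hb) : Walk G a b
  | cons {a b c : V} (ha hb : Bool) (h : G.Step a b ha hb) (w : Walk G b c) : Walk G a c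

/-- The arrowhead mark at the first vertex of a walk. -/
def Walk.firstArrow {G : MixedGraph V} : ∀ {x y : V}, Walk G x y → Bool
  | _, _, .single ha _ _ => ha
  | _, _, .cons ha _ _ _ => ha

/-- The list of vertices visited by a walk. -/
def Walk.support {G : MixedGraph V} : ∀ {x y : V}, Walk G x y → List V
  | x, y, .single _ _ _ => [x, y]
  | x, _, .cons _ _ _ w => x :: w.support

/-- A walk is a path if it has no repeated vertices. -/
def Walk.IsPath {G : MixedGraph V} {x y : V} (w : Walk G x y) : Prop := w.support.Nodup

/-- A walk is blocked by the set `C` if some intermediate vertex of it is a non-collider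
belonging to `C`, or a collider without descendants in `C`. -/
def Walk.Blocked (G : MixedGraph V) (C : Set V) : ∀ {x y : V}, Walk G x y → Prop
  | _, _, .single _ _ _ => False
  | _, _, .cons (b := b) _ hb _ w =>
      (if hb = true ∧ w.firstArrow = true then ∀ d, G.Desc b d → d ∉ C else b ∈ C)
        ∨ Walk.Blocked G C w

/-- The intermediate (non-endpoint) vertices of a walk. -/
def Walk.inner {G : MixedGraph V} : ∀ {x y : V}, Walk G x y → List V
  | _, _, .single _ _ _ => []
  | _, _, .cons (b := b) _ _ _ w => b :: w.inner

/-- m-separation relative to a set `R`: every path from `Y` to `Z` all of whose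
non-endpoint vertices lie in `R` is blocked by `C`.  (In a SWIG, `R` is taken to be the
set of random vertices.) -/
def MSepIn (G : MixedGraph V) (R : Set V) (Y Z C : Set V) : Prop :=
  ∀ y ∈ Y, ∀ z ∈ Z, ∀ w : G.Walk y z, w.IsPath → (∀ v ∈ w.inner, v ∈ R) →
    Walk.Blocked G C w

/-- m-separation: every path from `Y` to `Z` is blocked by `C`. -/
def MSep (G : MixedGraph V) (Y Z C : Set V) : Prop :=
  MSepIn G Set.univ Y Z C

/-- The single world intervention graph obtained by splitting every vertex in `A`
into a random half `Sum.inl` (inheriting all edges with an arrowhead at it) and a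
fixed half `Sum.inr` (inheriting all outgoing directed edges).  Vertices `Sum.inl i`
are the random vertices; vertices `Sum.inr i` for `i ∈ A` are the fixed vertices
(`Sum.inr i` for `i ∉ A` is an isolated junk vertex). -/
def swig (G : MixedGraph V) (A : Set V) : MixedGraph (V ⊕ V) where
  dir x y :=
    match x, y with
    | Sum.inl i, Sum.inl j => G.dir i j ∧ i ∉ A
    | Sum.inr i, Sum.inl j => G.dir i j ∧ i ∈ A
    | _, _ => False
  bi x y :=
    match x, y with
    | Sum.inl i, Sum.inl j => G.bi i j
    | _, _ => False
  bi_symm := by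
    rintro (i | i) (j | j) h
    · exact G.bi_symm i j h
    · exact False.elim h
    · exact False.elim h
    · exact False.elim h

/-- `G` with all edges carrying an arrowhead at a vertex of `X` removed (Pearl's `G_{X̄}`). -/
def removeInto (G : MixedGraph V) (X : Set V) : MixedGraph V where
  dir i j := G.dir i j ∧ j ∉ X
  bi i j := G.bi i j ∧ i ∉ X ∧ j ∉ X
  bi_symm := fun i j h => ⟨G.bi_symm i j h.1, h.2.2, h.2.1⟩

/-- `G` with all directed edges out of a vertex of `Z` removed (Pearl's `G_{Z̲}`). -/
def removeOut (G : MixedGraph V) (Z : Set V) : MixedGraph V where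
  dir i j := G.dir i j ∧ i ∉ Z
  bi := G.bi
  bi_symm := G.bi_symm

end MixedGraph

namespace MixedGraph

variable {V : Type} {G H K : MixedGraph V} {C : Set V} {x y : V}

/-- The arrowhead mark at the last vertex of a walk. -/
def Walk.lastArrow : ∀ {x y : V}, Walk G x y → Bool
  | _, _, .single _ hb _ => hb
  | _, _, .cons _ _ _ w => w.lastArrow

/-- Inner vertices with their collider status. -/
def Walk.Statuses : ∀ {x y : V}, Walk G x y → List (V × Bool)
  | _, _, .single _ _ _ => []
  | _, _, .cons (b := b) _ hb _ w => (b, hb && w.firstArrow) :: w.Statuses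

lemma Walk.inner_eq_statuses : ∀ {x y : V} (w : Walk G x y),
    w.inner = w.Statuses.map Prod.fst
  | _, _, .single _ _ _ => rfl
  | _, _, .cons _ _ _ w => by simp [Walk.inner, Walk.Statuses, w.inner_eq_statuses]

lemma Walk.support_eq : ∀ {x y : V} (w : Walk G x y),
    w.support = x :: (w.inner ++ [y])
  | _, _, .single _ _ _ => rfl
  | _, _, .cons _ _ _ w => by simp [Walk.support, Walk.inner, w.support_eq]

/-- The per-vertex blocking condition. -/
def StatusCond (G : MixedGraph V) (C : Set V) (bs : V × Bool) : Prop :=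
  if bs.2 = true then ∀ d, G.Desc bs.1 d → d ∉ C else bs.1 ∈ C

lemma statusCond_true {G : MixedGraph V} {C : Set V} {b : V} :
    StatusCond G C (b, true) ↔ ∀ d, G.Desc b d → d ∉ C := by simp [StatusCond]

lemma statusCond_false {G : MixedGraph V} {C : Set V} {b : V} :
    StatusCond G C (b, false) ↔ b ∈ C := by simp [StatusCond]

lemma Walk.blocked_iff (C : Set V) : ∀ {x y : V} (w : Walk G x y),
    (Walk.Blocked G C w ↔ ∃ bs ∈ w.Statuses, StatusCond G C bs)
  | _, _, .single _ _ _ => by simp [Walk.Blocked, Walk.Statuses]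
  | _, _, .cons (b := b) ha hb h w => by
      have IH := Walk.blocked_iff C w
      simp only [Walk.Blocked, Walk.Statuses, List.mem_cons, IH]
      constructor
      · rintro (h1 | ⟨bs, h2, h3⟩)
        · refine ⟨(b, hb && w.firstArrow), Or.inl rfl, ?_⟩
          cases hhb : hb <;> cases hfa : w.firstArrow <;>
            simp_all [StatusCond]
        · exact ⟨bs, Or.inr h2, h3⟩
      · rintro ⟨bs, (rfl | h2), h3⟩
        · left
          cases hhb : hb <;> cases hfa : w.firstArrow <;>
            simp_all [StatusCond]
        · exact Or.inr ⟨bs, h2, h3⟩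

/-- Appending walks. -/
def Walk.append : ∀ {x y z : V}, Walk G x y → Walk G y z → Walk G x z
  | _, _, _, .single ha hb h, w₂ => .cons ha hb h w₂
  | _, _, _, .cons ha hb h w, w₂ => .cons ha hb h (w.append w₂)

lemma Walk.firstArrow_append : ∀ {x y z : V} (w₁ : Walk G x y) (w₂ : Walk G y z),
    (w₁.append w₂).firstArrow = w₁.firstArrow
  | _, _, _, .single _ _ _, _ => rfl
  | _, _, _, .cons _ _ _ _, _ => rfl

lemma Walk.statuses_append : ∀ {x y z : V} (w₁ : Walk G x y) (w₂ : Walk G y z),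
    (w₁.append w₂).Statuses
      = w₁.Statuses ++ (y, w₁.lastArrow && w₂.firstArrow) :: w₂.Statuses
  | _, _, _, .single _ _ _, w₂ => rfl
  | _, _, _, .cons _ _ _ w, w₂ => by
      simp [Walk.append, Walk.Statuses, Walk.lastArrow, w.statuses_append w₂,
        Walk.firstArrow_append]

/-- All edges of the walk are also edges of `K`. -/
def Walk.EdgesIn (K : MixedGraph V) : ∀ {x y : V}, Walk G x y → Prop
  | x, y, .single ha hb _ => K.Step x y ha hb
  | x, _, .cons (b := b) ha hb _ w => K.Step x b ha hb ∧ w.EdgesIn K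

/-- Transfer a walk to another graph containing its edges. -/
def Walk.transfer : ∀ {x y : V} (w : Walk G x y), w.EdgesIn K → Walk K x y
  | _, _, .single ha hb _, h => .single ha hb h
  | _, _, .cons ha hb _ w, h => .cons ha hb h.1 (w.transfer h.2)

lemma Walk.firstArrow_transfer : ∀ {x y : V} (w : Walk G x y) (h : w.EdgesIn K),
    (w.transfer h).firstArrow = w.firstArrow
  | _, _, .single _ _ _, _ => rfl
  | _, _, .cons _ _ _ _, _ => rfl

lemma Walk.lastArrow_transfer : ∀ {x y : V} (w : Walk G x y) (h : w.EdgesIn K),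
    (w.transfer h).lastArrow = w.lastArrow
  | _, _, .single _ _ _, _ => rfl
  | _, _, .cons _ _ _ w, h => w.lastArrow_transfer h.2

lemma Walk.statuses_transfer : ∀ {x y : V} (w : Walk G x y) (h : w.EdgesIn K),
    (w.transfer h).Statuses = w.Statuses
  | _, _, .single _ _ _, _ => rfl
  | _, _, .cons _ _ _ w, h => by
      simp [Walk.transfer, Walk.Statuses, w.statuses_transfer h.2,
        Walk.firstArrow_transfer]

lemma Walk.support_transfer : ∀ {x y : V} (w : Walk G x y) (h : w.EdgesIn K),
    (w.transfer h).support = w.support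
  | _, _, .single _ _ _, _ => rfl
  | _, _, .cons _ _ _ w, h => by
      simp [Walk.transfer, Walk.support, w.support_transfer h.2]

lemma Walk.edgesIn_mono (hmono : ∀ a b ha hb, K.Step a b ha hb → H.Step a b ha hb) :
    ∀ {x y : V} (w : Walk G x y), w.EdgesIn K → w.EdgesIn H
  | _, _, .single ha hb _, h => hmono _ _ _ _ h
  | _, _, .cons ha hb _ w, h => ⟨hmono _ _ _ _ h.1, w.edgesIn_mono hmono h.2⟩

lemma Walk.edgesIn_self : ∀ {x y : V} (w : Walk G x y), w.EdgesIn G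
  | _, _, .single _ _ h => h
  | _, _, .cons _ _ h w => ⟨h, w.edgesIn_self⟩

lemma Walk.edgesIn_of_le (hmono : ∀ a b ha hb, G.Step a b ha hb → K.Step a b ha hb) :
    ∀ {x y : V} (w : Walk G x y), w.EdgesIn K :=
  fun w => Walk.edgesIn_mono hmono w w.edgesIn_self

end MixedGraph
namespace MixedGraph

variable {V : Type} {G H K : MixedGraph V} {C : Set V} {x y : V}

open Classical in
/-- The prefix of a walk up to the first occurrence of an inner vertex `c`. -/
noncomputable def Walk.takeUntil : ∀ {x y : V} (w : Walk G x y) (c : V), c ∈ w.inner → Walk G x c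
  | _, _, .single _ _ _, c, h => absurd h List.not_mem_nil
  | _, _, .cons (b := b) ha hb hs w, c, h =>
      if hbc : b = c then hbc ▸ Walk.single ha hb hs
      else Walk.cons ha hb hs (w.takeUntil c (by
        rcases List.mem_cons.1 h with h' | h'
        · exact absurd h'.symm hbc
        · exact h'))

lemma Walk.firstArrow_takeUntil : ∀ {x y : V} (w : Walk G x y) (c : V) (h : c ∈ w.inner),
    (w.takeUntil c h).firstArrow = w.firstArrow
  | _, _, .single _ _ _, c, h => absurd h List.not_mem_nil
  | _, _, .cons (b := b) ha hb hs w, c, h => by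
      rw [Walk.takeUntil]
      split
      · rename_i hbc; subst hbc; rfl
      · rfl

lemma Walk.edgesIn_takeUntil : ∀ {x y : V} (w : Walk G x y) (c : V) (h : c ∈ w.inner),
    w.EdgesIn K → (w.takeUntil c h).EdgesIn K
  | _, _, .single _ _ _, c, h, _ => absurd h List.not_mem_nil
  | _, _, .cons (b := b) ha hb hs w, c, h, he => by
      rw [Walk.takeUntil]
      split
      · rename_i hbc; subst hbc; exact he.1
      · exact ⟨he.1, w.edgesIn_takeUntil c _ he.2⟩

lemma Walk.statuses_takeUntil : ∀ {x y : V} (w : Walk G x y) (c : V) (h : c ∈ w.inner),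
    ∃ s rest, w.Statuses = (w.takeUntil c h).Statuses ++ (c, s) :: rest ∧
      c ∉ ((w.takeUntil c h).Statuses.map Prod.fst)
  | _, _, .single _ _ _, c, h => absurd h List.not_mem_nil
  | _, _, .cons (b := b) ha hb hs w, c, h => by
      rw [Walk.takeUntil]
      split
      · rename_i hbc; subst hbc
        exact ⟨hb && w.firstArrow, w.Statuses, rfl, by simp [Walk.Statuses]⟩
      · rename_i hbc
        obtain ⟨s, rest, h1, h2⟩ := w.statuses_takeUntil c (by
          rcases List.mem_cons.1 h with h' | h'
          · exact absurd h'.symm hbc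
          · exact h')
        refine ⟨s, rest, ?_, ?_⟩
        · simp [Walk.Statuses, Walk.firstArrow_takeUntil, h1]
        · simp only [Walk.Statuses, List.map_cons, List.mem_cons]
          rintro (h' | h')
          · exact hbc h'.symm
          · exact h2 h'

/-- The walk along a directed chain. -/
def Walk.ofChain : ∀ (x : V) (l : List V) (z : V), List.Chain G.dir x (l ++ [z]) → Walk G x z
  | x, [], z, h => Walk.single false true (by
      have := (List.chain_cons.1 h).1
      exact this)
  | x, u :: l, z, h => Walk.cons false true (List.chain_cons.1 h).1
      (Walk.ofChain u l z (List.chain_cons.1 h).2)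

lemma Walk.firstArrow_ofChain (x : V) (l : List V) (z : V) (h : List.Chain G.dir x (l ++ [z])) :
    (Walk.ofChain x l z h).firstArrow = false := by
  cases l with
  | nil => rfl
  | cons a l => rfl

lemma Walk.statuses_ofChain : ∀ (x : V) (l : List V) (z : V) (h : List.Chain G.dir x (l ++ [z])),
    (Walk.ofChain x l z h).Statuses = l.map (fun u => (u, false))
  | x, [], z, h => rfl
  | x, u :: l, z, h => by
      have IH := Walk.statuses_ofChain u l z (List.chain_cons.1 h).2
      simp only [Walk.ofChain, Walk.Statuses, IH, List.map_cons, List.cons.injEq, and_true]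
      cases l <;> rfl

/-! ### removeOut step lemmas -/

lemma step_removeOut_dir {A : Set V} {a b : V} {ha hb : Bool}
    (h : (G.removeOut A).Step a b ha hb) :
    (ha = false → G.dir a b ∧ a ∉ A) ∧ (hb = false → G.dir b a ∧ b ∉ A) := by
  cases ha <;> cases hb <;> simp_all [Step, removeOut]

lemma step_removeOut_mono {A B : Set V} {a b : V} {ha hb : Bool} (hAB : A ⊆ B)
    (h : (G.removeOut B).Step a b ha hb) : (G.removeOut A).Step a b ha hb := by
  cases ha <;> cases hb <;> simp_all [Step, removeOut] <;> tauto

lemma step_removeOut_of {A B : Set V} {a b : V} {ha hb : Bool}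
    (h : (G.removeOut A).Step a b ha hb)
    (h1 : ha = false → a ∉ B) (h2 : hb = false → b ∉ B) :
    (G.removeOut B).Step a b ha hb := by
  cases ha <;> cases hb <;> simp_all [Step, removeOut]

/-- A vertex at which some walk-edge in `removeOut A` has a tail is not in `A`:
the start of a walk whose first mark is `false`. -/
lemma Walk.start_not_mem {A : Set V} :
    ∀ {x y : V} (w : Walk (G.removeOut A) x y), w.firstArrow = false → x ∉ A
  | _, _, .single ha hb h, hfa => by
      subst hfa
      exact ((step_removeOut_dir h).1 rfl).2
  | _, _, .cons ha hb h w, hfa => by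
      subst hfa
      exact ((step_removeOut_dir h).1 rfl).2

/-- A non-collider inner vertex of a walk in `removeOut A` is not in `A`. -/
lemma Walk.noncollider_not_mem {A : Set V} :
    ∀ {x y : V} (w : Walk (G.removeOut A) x y) (b : V), (b, false) ∈ w.Statuses → b ∉ A
  | _, _, .single _ _ _, b, hmem => absurd hmem List.not_mem_nil
  | _, _, .cons ha hb h w, b, hmem => by
      rcases List.mem_cons.1 hmem with h' | h'
      · have hb2 : b = _ := congrArg Prod.fst h'
        cases hb2
        have : (hb && w.firstArrow) = false := (congrArg Prod.snd h').symm
        rcases Bool.and_eq_false_iff.1 this with h'' | h''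
        · subst h''
          exact ((step_removeOut_dir h).2 rfl).2
        · exact w.start_not_mem h''
      · exact w.noncollider_not_mem b h'

end MixedGraph
namespace MixedGraph

variable {V : Type} {r s : V → V → Prop}

lemma chain_to_rtg : ∀ (l : List V) (a b : V), List.Chain r a (l ++ [b]) →
    Relation.ReflTransGen r a b
  | [], a, b, h => Relation.ReflTransGen.single (List.chain_cons.1 h).1
  | u :: l, a, b, h =>
      Relation.ReflTransGen.head (List.chain_cons.1 h).1
        (chain_to_rtg l u b (List.chain_cons.1 h).2)

lemma rtg_to_chain {a b : V} (h : Relation.ReflTransGen r a b) :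
    a = b ∨ ∃ l, List.Chain r a (l ++ [b]) := by
  induction h with
  | refl => exact Or.inl rfl
  | tail h1 h2 ih =>
      rename_i c d
      right
      rcases ih with rfl | ⟨l, hl⟩
      · exact ⟨[], List.chain_cons.2 ⟨h2, List.Chain.nil⟩⟩
      · refine ⟨l ++ [c], ?_⟩
        rw [List.append_assoc]
        exact (List.isChain_cons_split.2 ⟨hl, List.chain_cons.2 ⟨h2, List.Chain.nil⟩⟩)

lemma chain_imp_init : ∀ (l : List V) (a z : V), List.Chain r a (l ++ [z]) →
    (∀ x ∈ a :: l, ∀ y, r x y → s x y) → List.Chain s a (l ++ [z])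
  | [], a, z, h, himp => List.chain_cons.2
      ⟨himp a List.mem_cons_self z (List.chain_cons.1 h).1, List.Chain.nil⟩
  | u :: l, a, z, h, himp => List.chain_cons.2
      ⟨himp a List.mem_cons_self u (List.chain_cons.1 h).1,
        chain_imp_init l u z (List.chain_cons.1 h).2
          (fun x hx => himp x (List.mem_cons_of_mem _ hx))⟩

lemma chain_tails : ∀ (l : List V) (a z : V), List.Chain r a (l ++ [z]) →
    ∀ u ∈ l, ∃ v, r u v
  | [], _, _, _, u, hu => absurd hu List.not_mem_nil
  | b :: l, a, z, h, u, hu => by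
      rcases List.mem_cons.1 hu with rfl | hu
      · cases l with
        | nil => exact ⟨z, (List.chain_cons.1 (List.chain_cons.1 h).2).1⟩
        | cons c l => exact ⟨c, (List.chain_cons.1 (List.chain_cons.1 h).2).1⟩
      · exact chain_tails l b z (List.chain_cons.1 h).2 u hu

open Classical in
lemma exists_first {α : Type*} (P : α → Prop) :
    ∀ (l : List α), (∃ x ∈ l, P x) → ∃ u x v, l = u ++ x :: v ∧ P x ∧ ∀ y ∈ u, ¬ P y
  | [], h => absurd h (by simp)
  | a :: l, h => by
      by_cases ha : P a
      · exact ⟨[], a, l, rfl, ha, by simp⟩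
      · obtain ⟨x, hx, hPx⟩ := h
        rcases List.mem_cons.1 hx with rfl | hx
        · exact absurd hPx ha
        · obtain ⟨u, x', v, h1, h2, h3⟩ := exists_first P l ⟨x, hx, hPx⟩
          refine ⟨a :: u, x', v, by simp [h1], h2, ?_⟩
          rintro y hy
          rcases List.mem_cons.1 hy with rfl | hy
          · exact ha
          · exact h3 y hy

lemma split_unique {α β : Type*} (c : α) (s₁ s₂ : β) :
    ∀ (u₁ u₂ v₁ v₂ : List (α × β)),
    u₁ ++ (c, s₁) :: v₁ = u₂ ++ (c, s₂) :: v₂ →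
    ((u₁ ++ (c, s₁) :: v₁).map Prod.fst).Nodup →
    u₁ = u₂ ∧ s₁ = s₂ ∧ v₁ = v₂ := by
  intro u₁
  induction u₁ with
  | nil =>
      intro u₂ v₁ v₂ heq hnd
      cases u₂ with
      | nil =>
          simp only [List.nil_append, List.cons.injEq, Prod.mk.injEq] at heq
          exact ⟨rfl, heq.1.2, heq.2⟩
      | cons x u₂ =>
          exfalso
          simp only [List.nil_append, List.cons_append, List.cons.injEq] at heq
          obtain ⟨rfl, heq2⟩ := heq
          simp only [List.nil_append, List.map_cons, List.nodup_cons] at hnd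
          apply hnd.1
          rw [heq2]
          simp
  | cons x u₁ IH =>
      intro u₂ v₁ v₂ heq hnd
      cases u₂ with
      | nil =>
          exfalso
          simp only [List.nil_append, List.cons_append, List.cons.injEq] at heq
          obtain ⟨rfl, heq2⟩ := heq
          simp only [List.cons_append, List.map_cons, List.nodup_cons] at hnd
          apply hnd.1
          simp
      | cons x' u₂ =>
          simp only [List.cons_append, List.cons.injEq] at heq
          obtain ⟨rfl, heq2⟩ := heq
          simp only [List.cons_append, List.map_cons, List.nodup_cons] at hnd
          obtain ⟨h1, h2, h3⟩ := IH u₂ v₁ v₂ heq2 hnd.2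
          exact ⟨by rw [h1], h2, h3⟩

end MixedGraph
namespace MixedGraph

variable {V : Type} {r : V → V → Prop}

lemma not_nodup_decomp {α : Type*} :
    ∀ (l : List α), ¬ l.Nodup → ∃ x u v w, l = u ++ x :: v ++ x :: w
  | [], h => absurd List.nodup_nil h
  | a :: l, h => by
      by_cases ha : a ∈ l
      · obtain ⟨s, t, rfl⟩ := List.append_of_mem ha
        exact ⟨a, [], s, t, rfl⟩
      · have hl : ¬ l.Nodup := fun hn => h (List.nodup_cons.2 ⟨ha, hn⟩)
        obtain ⟨x, u, v, w, rfl⟩ := not_nodup_decomp l hl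
        exact ⟨x, a :: u, v, w, rfl⟩

lemma exists_nodup_chain_aux :
    ∀ (n : ℕ) (l : List V) (a z : V), l.length < n → a ≠ z → List.Chain r a (l ++ [z]) →
      ∃ l', List.Chain r a (l' ++ [z]) ∧ (a :: (l' ++ [z])).Nodup ∧ l' ⊆ l := by
  intro n
  induction n with
  | zero => intro l a z h; exact absurd h (Nat.not_lt_zero _)
  | succ n IH =>
      intro l a z hlen hne hch
      by_cases hal : a ∈ l
      · obtain ⟨u, w, rfl⟩ := List.append_of_mem hal
        have hch' : List.Chain r a (w ++ [z]) := by
          rw [List.append_assoc, List.cons_append] at hch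
          exact (List.isChain_cons_split.1 hch).2
        obtain ⟨l', h1, h2, h3⟩ := IH w a z (by simp at hlen ⊢; omega) hne hch'
        exact ⟨l', h1, h2, fun x hx => by simp [h3 hx]⟩
      · by_cases hzl : z ∈ l
        · obtain ⟨u, w, rfl⟩ := List.append_of_mem hzl
          have hch' : List.Chain r a (u ++ [z]) := by
            rw [List.append_assoc, List.cons_append] at hch
            exact (List.isChain_cons_split.1 hch).1
          obtain ⟨l', h1, h2, h3⟩ := IH u a z (by simp at hlen ⊢; omega) hne hch'
          exact ⟨l', h1, h2, fun x hx => by simp [h3 hx]⟩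
        · by_cases hnd : l.Nodup
          · refine ⟨l, hch, ?_, fun x hx => hx⟩
            refine List.nodup_cons.2 ⟨?_, ?_⟩
            · simp [hal, hne]
            · refine List.Nodup.append hnd (List.nodup_singleton z) ?_
              intro x hx hxz
              simp at hxz
              subst hxz
              exact hzl hx
          · obtain ⟨x, u, v, w, rfl⟩ := not_nodup_decomp l hnd
            have h1 : List.Chain r a ((u ++ x :: v) ++ x :: (w ++ [z])) := by
              simpa using hch
            have h2 := List.isChain_cons_split.1 h1
            have h3 : List.Chain r a (u ++ x :: (v ++ [x])) := by
              have := h2.1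
              simpa [List.Chain] using this
            have h4 := List.isChain_cons_split.1 h3
            have h5 : List.Chain r a (u ++ x :: (w ++ [z])) :=
              List.isChain_cons_split.2 ⟨h4.1, h2.2⟩
            have h6 : List.Chain r a ((u ++ x :: w) ++ [z]) := by simpa using h5
            obtain ⟨l', hh1, hh2, hh3⟩ := IH (u ++ x :: w) a z (by simp at hlen ⊢; omega) hne h6
            refine ⟨l', hh1, hh2, fun y hy => ?_⟩
            have := hh3 hy
            simp at this ⊢
            tauto

lemma exists_nodup_chain {a z : V} (hne : a ≠ z) {l : List V}
    (hch : List.Chain r a (l ++ [z])) :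
    ∃ l', List.Chain r a (l' ++ [z]) ∧ (a :: (l' ++ [z])).Nodup ∧ l' ⊆ l :=
  exists_nodup_chain_aux (l.length + 1) l a z (Nat.lt_succ_self _) hne hch

open Classical in
lemma chain_first_hit :
    ∀ (l : List V) (a z : V) (S : Set V), z ∈ S → List.Chain r a (l ++ [z]) →
      ∃ l₁ d, d ∈ S ∧ (∀ u ∈ l₁, u ∉ S) ∧ List.Chain r a (l₁ ++ [d])
  | [], a, z, S, hz, hch => ⟨[], z, hz, by simp, hch⟩
  | u :: l, a, z, S, hz, hch => by
      by_cases hu : u ∈ S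
      · exact ⟨[], u, hu, by simp, List.chain_cons.2 ⟨(List.chain_cons.1 hch).1, List.Chain.nil⟩⟩
      · obtain ⟨l₁, d, h1, h2, h3⟩ := chain_first_hit l u z S hz (List.chain_cons.1 hch).2
        refine ⟨u :: l₁, d, h1, ?_, List.chain_cons.2 ⟨(List.chain_cons.1 hch).1, h3⟩⟩
        rintro x hx
        rcases List.mem_cons.1 hx with rfl | hx
        · exact hu
        · exact h2 x hx

open Classical in
lemma chain_last_hit_aux :
    ∀ (n : ℕ) (l : List V) (a z : V) (S : Set V), l.length < n → a ∈ S →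
      List.Chain r a (l ++ [z]) →
      ∃ l₁ v l₂, a :: l = l₁ ++ v :: l₂ ∧ v ∈ S ∧ (∀ u ∈ l₂, u ∉ S) ∧
        List.Chain r v (l₂ ++ [z]) := by
  intro n
  induction n with
  | zero => intro l a z S h; exact absurd h (Nat.not_lt_zero _)
  | succ n IH =>
      intro l a z S hlen ha hch
      by_cases hex : ∃ u ∈ l, u ∈ S
      · obtain ⟨u, hu, huS⟩ := hex
        obtain ⟨m₁, m₂, rfl⟩ := List.append_of_mem hu
        have hch' : List.Chain r u (m₂ ++ [z]) := by
          rw [List.append_assoc, List.cons_append] at hch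
          exact (List.isChain_cons_split.1 hch).2
        obtain ⟨l₁, v, l₂, h1, h2, h3, h4⟩ := IH m₂ u z S (by simp at hlen ⊢; omega) huS hch'
        refine ⟨a :: m₁ ++ l₁, v, l₂, ?_, h2, h3, h4⟩
        simp only [List.cons_append, List.append_assoc]
        rw [← h1]
      · refine ⟨[], a, l, rfl, ha, ?_, hch⟩
        intro u hu huS
        exact hex ⟨u, hu, huS⟩

lemma chain_last_hit {l : List V} {a z : V} {S : Set V} (ha : a ∈ S)
    (hch : List.Chain r a (l ++ [z])) :
    ∃ l₁ v l₂, a :: l = l₁ ++ v :: l₂ ∧ v ∈ S ∧ (∀ u ∈ l₂, u ∉ S) ∧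
      List.Chain r v (l₂ ++ [z]) :=
  chain_last_hit_aux (l.length + 1) l a z S (Nat.lt_succ_self _) ha hch

end MixedGraph
namespace MixedGraph

variable {V : Type} (G : MixedGraph V) (A : Set V)

lemma swig_step_iff (a b : V) (ha hb : Bool) :
    (G.swig A).Step (Sum.inl a) (Sum.inl b) ha hb ↔ (G.removeOut A).Step a b ha hb := by
  cases ha <;> cases hb <;> simp [Step, swig, removeOut]

lemma swig_desc_iff (b : V) (d : V ⊕ V) :
    (G.swig A).Desc (Sum.inl b) d ↔ ∃ c, d = Sum.inl c ∧ (G.removeOut A).Desc b c := by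
  constructor
  · intro h
    induction h with
    | refl => exact ⟨b, rfl, Relation.ReflTransGen.refl⟩
    | tail h1 h2 ih =>
        obtain ⟨c, rfl, hc⟩ := ih
        rename_i e
        cases e with
        | inl e =>
            have : G.dir c e ∧ c ∉ A := h2
            exact ⟨e, rfl, Relation.ReflTransGen.tail hc this⟩
        | inr e => exact absurd h2 (by simp [swig])
  · rintro ⟨c, rfl, hc⟩
    exact Relation.ReflTransGen.lift Sum.inl (fun x y h => h) _ _ hc

lemma swig_walk_map {x y : V} (w : Walk (G.removeOut A) x y) :
    ∃ w' : Walk (G.swig A) (Sum.inl x) (Sum.inl y),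
      w'.Statuses = w.Statuses.map (fun bs => (Sum.inl bs.1, bs.2)) ∧
      w'.support = w.support.map Sum.inl ∧
      w'.firstArrow = w.firstArrow := by
  induction w with
  | single ha hb h =>
      exact ⟨Walk.single ha hb ((swig_step_iff G A _ _ _ _).2 h), rfl, rfl, rfl⟩
  | cons ha hb h w IH =>
      obtain ⟨w', h1, h2, h3⟩ := IH
      refine ⟨Walk.cons ha hb ((swig_step_iff G A _ _ _ _).2 h) w', ?_, ?_, rfl⟩
      · simp [Walk.Statuses, h1, h3]
      · simp [Walk.support, h2]

lemma swig_walk_pullback :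
    ∀ {p q : V ⊕ V} (w : Walk (G.swig A) p q), (∀ v ∈ w.inner, ∃ c, v = Sum.inl c) →
    ∀ (a b : V), p = Sum.inl a → q = Sum.inl b →
    ∃ w' : Walk (G.removeOut A) a b,
      w.Statuses = w'.Statuses.map (fun bs => (Sum.inl bs.1, bs.2)) ∧
      w.support = w'.support.map Sum.inl ∧
      w.firstArrow = w'.firstArrow := by
  intro p q w
  induction w with
  | single ha hb h =>
      intro _ a b hp hq
      subst hp; subst hq
      exact ⟨Walk.single ha hb ((swig_step_iff G A _ _ _ _).1 h), rfl, rfl, rfl⟩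
  | cons ha hb h w IH =>
      rename_i p m q'
      intro hinner a b hp hq
      subst hp; subst hq
      obtain ⟨c, rfl⟩ : ∃ c, m = Sum.inl c := hinner m (by simp [Walk.inner])
      obtain ⟨w', h1, h2, h3⟩ := IH (fun v hv => hinner v (by simp [Walk.inner, hv])) c b rfl rfl
      refine ⟨Walk.cons ha hb ((swig_step_iff G A _ _ _ _).1 h) w', ?_, ?_, rfl⟩
      · simp [Walk.Statuses, h1, h3]
      · simp [Walk.support, h2]

end MixedGraph
namespace MixedGraph

variable {V : Type} (G : MixedGraph V) (A : Set V)

lemma swig_msep_iff (Y Z C : Set V) :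
    MSepIn (G.swig A) (Set.range Sum.inl) (Sum.inl '' Y) (Sum.inl '' Z) (Sum.inl '' C) ↔
      MSepIn (G.removeOut A) Set.univ Y Z C := by
  constructor
  · intro h y hy z hz w hpath _
    obtain ⟨w', hs, hsup, _⟩ := swig_walk_map G A w
    have hpath' : w'.IsPath := by
      rw [Walk.IsPath, hsup]
      exact hpath.map Sum.inl_injective
    have hinner : ∀ v ∈ w'.inner, v ∈ Set.range Sum.inl := by
      intro v hv
      rw [Walk.inner_eq_statuses, hs] at hv
      simp only [List.map_map, List.mem_map] at hv
      obtain ⟨bs, _, rfl⟩ := hv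
      exact ⟨bs.1, rfl⟩
    have hb := h _ ⟨y, hy, rfl⟩ _ ⟨z, hz, rfl⟩ w' hpath' hinner
    rw [Walk.blocked_iff] at hb ⊢
    obtain ⟨bs, hmem, hcond⟩ := hb
    rw [hs] at hmem
    obtain ⟨⟨b, sb⟩, hmem0, rfl⟩ := List.mem_map.1 hmem
    refine ⟨(b, sb), hmem0, ?_⟩
    cases sb with
    | true =>
        rw [statusCond_true] at hcond ⊢
        intro d hd hdC
        exact hcond (Sum.inl d) ((swig_desc_iff G A b _).2 ⟨d, rfl, hd⟩) ⟨d, hdC, rfl⟩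
    | false =>
        rw [statusCond_false] at hcond ⊢
        obtain ⟨c, hc, hceq⟩ := hcond
        cases Sum.inl_injective hceq
        exact hc
  · intro h p hp q hq w hpath hR
    obtain ⟨y, hy, rfl⟩ := hp
    obtain ⟨z, hz, rfl⟩ := hq
    obtain ⟨w', hs, hsup, _⟩ := swig_walk_pullback G A w
      (fun v hv => by
        obtain ⟨c, hc⟩ := hR v hv
        exact ⟨c, hc.symm⟩) y z rfl rfl
    have hpath' : w'.IsPath := by
      have := hpath
      rw [Walk.IsPath, hsup] at this
      exact this.of_map _
    have hb := h y hy z hz w' hpath' (by simp)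
    rw [Walk.blocked_iff] at hb ⊢
    obtain ⟨⟨b, sb⟩, hmem, hcond⟩ := hb
    refine ⟨(Sum.inl b, sb), by rw [hs]; exact List.mem_map_of_mem hmem, ?_⟩
    cases sb with
    | true =>
        rw [statusCond_true] at hcond ⊢
        intro d hd hdC
        obtain ⟨c, rfl, hc⟩ := (swig_desc_iff G A b d).1 hd
        obtain ⟨c', hc', hceq⟩ := hdC
        cases Sum.inl_injective hceq
        exact hcond c hc hc'
    | false =>
        rw [statusCond_false] at hcond ⊢
        exact ⟨b, hcond, rfl⟩

end MixedGraph
namespace MixedGraph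

variable {V : Type} {G : MixedGraph V}

lemma desc_removeOut_mono {A B : Set V} (hAB : A ⊆ B) {a e : V}
    (h : (G.removeOut B).Desc a e) : (G.removeOut A).Desc a e :=
  Relation.ReflTransGen.mono (fun _ _ hd => ⟨hd.1, fun hm => hd.2 (hAB hm)⟩) _ _ h

lemma desc_removeOut_mem {A : Set V} {a e : V}
    (h : (G.removeOut A).Desc a e) (ha : a ∈ A) : e = a := by
  rcases Relation.ReflTransGen.cases_head h with rfl | ⟨c, hc, _⟩
  · rfl
  · exact absurd ha hc.2

lemma Walk.support_ofChain (x : V) (l : List V) (z : V)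
    (h : List.Chain G.dir x (l ++ [z])) :
    (Walk.ofChain x l z h).support = x :: (l ++ [z]) := by
  rw [Walk.support_eq, Walk.inner_eq_statuses, Walk.statuses_ofChain]
  simp [List.map_map, Function.comp_def]

lemma Walk.edgesIn_removeOut_extend {A B : Set V} :
    ∀ {x y : V} (w : Walk (G.removeOut A) x y),
      (w.firstArrow = false → x ∉ B) → (w.lastArrow = false → y ∉ B) →
      (∀ b, (b, false) ∈ w.Statuses → b ∉ B) →
      w.EdgesIn (G.removeOut (A ∪ B))
  | _, _, .single ha hb h, h1, h2, _ => by
      refine step_removeOut_of h ?_ ?_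
      · intro hf
        subst hf
        have := (step_removeOut_dir h).1 rfl
        simp only [Set.mem_union]
        rintro (hA | hB)
        · exact this.2 hA
        · exact h1 rfl hB
      · intro hf
        subst hf
        have := (step_removeOut_dir h).2 rfl
        simp only [Set.mem_union]
        rintro (hA | hB)
        · exact this.2 hA
        · exact h2 rfl hB
  | _, _, .cons (b := b) ha hb h w, h1, h2, h3 => by
      constructor
      · refine step_removeOut_of h ?_ ?_
        · intro hf
          subst hf
          have := (step_removeOut_dir h).1 rfl
          simp only [Set.mem_union]
          rintro (hA | hB)
          · exact this.2 hA
          · exact h1 rfl hB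
        · intro hf
          have hnc : (b, false) ∈ (Walk.cons ha hb h w).Statuses := by
            subst hf
            simp [Walk.Statuses]
          have := (step_removeOut_dir h).2 hf
          simp only [Set.mem_union]
          rintro (hA | hB)
          · exact this.2 hA
          · exact h3 b hnc hB
      · refine w.edgesIn_removeOut_extend ?_ h2 ?_
        · intro hf
          apply h3 b
          simp [Walk.Statuses, hf]
        · intro b' hb'
          exact h3 b' (by simp [Walk.Statuses, hb'])

end MixedGraph


namespace MixedGraph

variable {V : Type} {G : MixedGraph V}

lemma Walk.isPath_takeUntil {x y : V} (p : Walk G x y) (c : V) (h : c ∈ p.inner)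
    (hp : p.IsPath) : (p.takeUntil c h).IsPath := by
  obtain ⟨s₁, rest, hdec, _⟩ := p.statuses_takeUntil c h
  rw [Walk.IsPath, Walk.support_eq]
  have h' := hp
  rw [Walk.IsPath, Walk.support_eq, Walk.inner_eq_statuses, hdec] at h'
  refine List.Nodup.sublist ?_ h'
  rw [Walk.inner_eq_statuses]
  simp only [List.map_append, List.map_cons]
  refine List.Sublist.cons₂ _ ?_
  rw [List.append_assoc]
  refine List.Sublist.append_left ?_ _
  exact List.cons_sublist_cons.2 (List.nil_sublist _)

end MixedGraph
namespace MixedGraph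

variable {V : Type}

theorem core (G : MixedGraph V) (Y Z W X T : Set V)
    (hYZ : Disjoint Y Z) (hZW : Disjoint Z W) (hT : T ⊆ W)
    (h0 : MSepIn (G.removeOut (X ∪ Z)) Set.univ Y Z W) :
    MSepIn (G.removeOut (X ∪ T)) Set.univ Y T (Z ∪ (W \ T)) ↔
      MSepIn (G.removeOut (X ∪ Z ∪ T)) Set.univ Y T (W \ T) := by
  have hsub12 : X ∪ T ⊆ X ∪ Z ∪ T := by intro v; simp only [Set.mem_union]; tauto
  have hsub02 : X ∪ Z ⊆ X ∪ Z ∪ T := by intro v; simp only [Set.mem_union]; tauto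
  constructor
  · -- easy direction
    intro hL y hy t ht p hpath _
    by_contra hnb
    have hE : p.EdgesIn (G.removeOut (X ∪ T)) :=
      Walk.edgesIn_of_le (fun a b ha hb h => step_removeOut_mono hsub12 h) p
    have hbl := hL y hy t ht (p.transfer hE)
      (by rw [Walk.IsPath, Walk.support_transfer]; exact hpath) (by simp)
    rw [Walk.blocked_iff] at hbl
    obtain ⟨⟨b, sb⟩, hmem, hcond⟩ := hbl
    rw [Walk.statuses_transfer] at hmem
    rw [Walk.blocked_iff] at hnb
    push_neg at hnb
    have hnc := hnb (b, sb) hmem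
    cases sb with
    | false =>
        rw [statusCond_false] at hcond hnc
        rcases hcond with hbZ | hbW
        · exact (p.noncollider_not_mem b hmem) (by simp [Set.mem_union, hbZ])
        · exact hnc hbW
    | true =>
        rw [statusCond_true] at hcond hnc
        push_neg at hnc
        obtain ⟨d, hd, hdW⟩ := hnc
        exact hcond d (desc_removeOut_mono hsub12 hd) (Or.inr hdW)
  · -- hard direction
    intro hR y hy t ht p hpath _
    by_contra hnb
    rw [Walk.blocked_iff] at hnb
    push_neg at hnb
    have hopenF : ∀ b, (b, false) ∈ p.Statuses → b ∉ Z ∪ (W \ T) := by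
      intro b hmem
      have h' := hnb (b, false) hmem
      rwa [statusCond_false] at h'
    have hopenT : ∀ b, (b, true) ∈ p.Statuses →
        ∃ d, (G.removeOut (X ∪ T)).Desc b d ∧ d ∈ Z ∪ (W \ T) := by
      intro b hmem
      have h' := hnb (b, true) hmem
      rw [statusCond_true] at h'
      push_neg at h'
      exact h'
    have hyZ : y ∉ Z := Set.disjoint_left.1 hYZ hy
    have htZ : t ∉ Z := fun h => Set.disjoint_left.1 hZW h (hT ht)
    have hE2' : p.EdgesIn (G.removeOut ((X ∪ T) ∪ Z)) := by
      refine p.edgesIn_removeOut_extend (fun _ => hyZ) (fun _ => htZ) ?_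
      intro b hmem hbZ
      exact hopenF b hmem (Or.inl hbZ)
    have hsetE : (X ∪ T) ∪ Z = X ∪ Z ∪ T := Set.union_right_comm X T Z
    have hE2 : p.EdgesIn (G.removeOut (X ∪ Z ∪ T)) := by rw [← hsetE]; exact hE2'
    by_cases hall : ∀ b, (b, true) ∈ p.Statuses →
        ∃ d, (G.removeOut (X ∪ Z ∪ T)).Desc b d ∧ d ∈ W \ T
    · have hbl := hR y hy t ht (p.transfer hE2)
        (by rw [Walk.IsPath, Walk.support_transfer]; exact hpath) (by simp)
      rw [Walk.blocked_iff] at hbl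
      obtain ⟨⟨b, sb⟩, hmem, hcond⟩ := hbl
      rw [Walk.statuses_transfer] at hmem
      cases sb with
      | false =>
          rw [statusCond_false] at hcond
          exact hopenF b hmem (Or.inr hcond)
      | true =>
          rw [statusCond_true] at hcond
          obtain ⟨d, h1, h2⟩ := hall b hmem
          exact hcond d h1 h2
    · push_neg at hall
      obtain ⟨c₁, hc₁mem, hc₁bad⟩ := hall
      obtain ⟨as, bs₀, rest, hsplit, hbad, hgood⟩ :=
        exists_first (fun bs => bs.2 = true ∧
          ¬ ∃ d, (G.removeOut (X ∪ Z ∪ T)).Desc bs.1 d ∧ d ∈ W \ T)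
          p.Statuses ⟨(c₁, true), hc₁mem, rfl, fun ⟨d, h1, h2⟩ => hc₁bad d h1 h2⟩
      obtain ⟨c₀, s₀⟩ := bs₀
      obtain ⟨hs₀, hc₀bad⟩ := hbad
      simp only at hs₀ hc₀bad
      subst hs₀
      have hc₀memP : (c₀, true) ∈ p.Statuses := by rw [hsplit]; simp
      have hc₀inner : c₀ ∈ p.inner := by
        rw [Walk.inner_eq_statuses]
        exact List.mem_map.2 ⟨(c₀, true), hc₀memP, rfl⟩
      have hinnernd : p.inner.Nodup := by
        have h' := hpath
        rw [Walk.IsPath, Walk.support_eq] at h'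
        exact ((List.nodup_cons.1 h').2).of_append_left
      set s := p.takeUntil c₀ hc₀inner with hsdef
      obtain ⟨s₁', rest', hdec, hnotin⟩ := p.statuses_takeUntil c₀ hc₀inner
      have hndmap : ((s.Statuses ++ (c₀, s₁') :: rest').map Prod.fst).Nodup := by
        rw [← hdec, ← Walk.inner_eq_statuses]
        exact hinnernd
      obtain ⟨hsas, hs₁'eq, hrest'eq⟩ :=
        split_unique c₀ s₁' true s.Statuses as rest' rest (by rw [← hdec, hsplit]) hndmap
      have hasmem : ∀ bs ∈ as, bs ∈ p.Statuses := by
        intro bs h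
        rw [hsplit]
        simp [h]
      have hasgood : ∀ b, (b, true) ∈ as →
          ∃ d, (G.removeOut (X ∪ Z ∪ T)).Desc b d ∧ d ∈ W \ T := by
        intro b h
        by_contra hng
        exact (hgood (b, true) h) ⟨rfl, hng⟩
      have hasgood0 : ∀ b, (b, true) ∈ as →
          ∃ d, (G.removeOut (X ∪ Z)).Desc b d ∧ d ∈ W := by
        intro b h
        obtain ⟨d, h1, h2⟩ := hasgood b h
        exact ⟨d, desc_removeOut_mono hsub02 h1, h2.1⟩
      have hasopen : ∀ b, (b, false) ∈ as → b ∉ W := by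
        intro b h hbW
        have h1 := hopenF b (hasmem _ h)
        have h2 := p.noncollider_not_mem b (hasmem _ h)
        by_cases hbT : b ∈ T
        · exact h2 (Set.mem_union_right _ hbT)
        · exact h1 (Or.inr ⟨hbW, hbT⟩)
      have hc₀W₁ : c₀ ∉ W \ T := fun h => hc₀bad ⟨c₀, Relation.ReflTransGen.refl, h⟩
      obtain ⟨dd, hdesc, hddmem⟩ := hopenT c₀ hc₀memP
      have hEs : s.EdgesIn (G.removeOut (X ∪ Z ∪ T)) := p.edgesIn_takeUntil c₀ hc₀inner hE2
      have hEs0 : s.EdgesIn (G.removeOut (X ∪ Z)) :=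
        Walk.edgesIn_mono (fun a b ha hb h => step_removeOut_mono hsub02 h) s hEs
      have hspath : s.IsPath := p.isPath_takeUntil c₀ hc₀inner hpath
      by_cases hc₀Z : c₀ ∈ Z
      · -- contradiction with h0 via s
        have hbl := h0 y hy c₀ hc₀Z (s.transfer hEs0)
          (by rw [Walk.IsPath, Walk.support_transfer]; exact hspath) (by simp)
        rw [Walk.blocked_iff] at hbl
        obtain ⟨⟨b, sb⟩, hmem, hcond⟩ := hbl
        rw [Walk.statuses_transfer, hsas] at hmem
        cases sb with
        | false =>
            rw [statusCond_false] at hcond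
            exact hasopen b hmem hcond
        | true =>
            rw [statusCond_true] at hcond
            obtain ⟨d, h1, h2⟩ := hasgood0 b hmem
            exact hcond d h1 h2
      · -- build the descending chain
        rcases rtg_to_chain hdesc with heq | ⟨l, hch⟩
        · rcases hddmem with h | h
          · exact hc₀Z (heq ▸ h)
          · exact hc₀W₁ (heq ▸ h)
        · obtain ⟨l₁, d', hd'mem, hl₁, hch₁⟩ :=
            chain_first_hit l c₀ dd (Z ∪ (W \ T)) hddmem hch
          have hch₂ : List.Chain (G.removeOut (X ∪ Z ∪ T)).dir c₀ (l₁ ++ [d']) := by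
            refine chain_imp_init l₁ c₀ d' hch₁ ?_
            intro x hx y' hxy
            refine ⟨hxy.1, ?_⟩
            have hxZ : x ∉ Z := by
              rcases List.mem_cons.1 hx with rfl | hx'
              · exact hc₀Z
              · exact fun hz => hl₁ x hx' (Or.inl hz)
            have hxXT : x ∉ X ∪ T := hxy.2
            simp only [Set.mem_union] at hxXT ⊢
            tauto
          by_cases hd'W : d' ∈ W \ T
          · exact hc₀bad ⟨d', chain_to_rtg _ _ _ hch₂, hd'W⟩
          · have hd'Z : d' ∈ Z := hd'mem.resolve_right hd'W
            have hned : c₀ ≠ d' := fun h => hc₀Z (h ▸ hd'Z)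
            obtain ⟨l', hch', hnd', hsub'⟩ := exists_nodup_chain hned hch₂
            have hl' : ∀ u ∈ l', u ∉ Z ∪ (W \ T) := fun u hu => hl₁ u (hsub' hu)
            have hd'S : d' ∉ s.support := by
              rw [Walk.support_eq]
              simp only [List.mem_cons, List.mem_append, List.mem_singleton,
                List.not_mem_nil, or_false]
              rintro (rfl | h | rfl)
              · exact hyZ hd'Z
              · rw [Walk.inner_eq_statuses, hsas] at h
                obtain ⟨⟨b', sb'⟩, hmem', heq'⟩ := List.mem_map.1 h
                simp only at heq'
                subst heq'
                cases sb' with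
                | false => exact hopenF _ (hasmem _ hmem') (Or.inl hd'Z)
                | true =>
                    obtain ⟨e, he1, he2⟩ := hasgood _ hmem'
                    have heq2 := desc_removeOut_mem he1
                      (by simp only [Set.mem_union]; exact Or.inl (Or.inr hd'Z))
                    subst heq2
                    exact Set.disjoint_left.1 hZW hd'Z he2.1
              · exact hc₀Z hd'Z
            have hc₀S : c₀ ∈ {u | u ∈ s.support} := by
              rw [Set.mem_setOf_eq, Walk.support_eq]
              simp
            obtain ⟨l₁'', v, l₂, hdecomp, hvS, hl₂S, hchv⟩ :=
              chain_last_hit (S := {u | u ∈ s.support}) hc₀S hch'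
            have hc₀notl₂ : c₀ ∉ l₂ := fun h => hl₂S c₀ h hc₀S
            have hl₂sub : ∀ u ∈ l₂, u ∈ l' := by
              intro u hu
              have hmem' : u ∈ c₀ :: l' := by rw [hdecomp]; simp [hu]
              rcases List.mem_cons.1 hmem' with rfl | h
              · exact absurd hu hc₀notl₂
              · exact h
            have hsufnd : (v :: (l₂ ++ [d'])).Nodup := by
              refine List.Nodup.sublist ?_ hnd'
              have heql : c₀ :: (l' ++ [d']) = l₁'' ++ (v :: (l₂ ++ [d'])) := by
                rw [← List.cons_append, hdecomp]
                simp [List.append_assoc]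
              rw [heql]
              exact List.sublist_append_right _ _
            have hvout : v ∉ X ∪ Z ∪ T := by
              cases l₂ with
              | nil => exact (List.chain_cons.1 hchv).1.2
              | cons a tl => exact (List.chain_cons.1 hchv).1.2
            have hvW₁ : v ∉ W \ T := by
              have hvmem : v ∈ c₀ :: l' := by rw [hdecomp]; simp
              rcases List.mem_cons.1 hvmem with rfl | h
              · exact hc₀W₁
              · exact fun hw => hl' v h (Or.inr hw)
            have hvW : v ∉ W := by
              intro hw
              by_cases hvT : v ∈ T
              · exact hvout (Set.mem_union_right _ hvT)
              · exact hvW₁ ⟨hw, hvT⟩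
            have hchv0 : List.Chain (G.removeOut (X ∪ Z)).dir v (l₂ ++ [d']) :=
              List.Chain.imp (fun a b h => ⟨h.1, fun hm => h.2 (hsub02 hm)⟩) hchv
            have hl₂W : ∀ u ∈ l₂, u ∉ W := by
              intro u hu hw
              have h1 := hl' u (hl₂sub u hu)
              obtain ⟨e, he⟩ := chain_tails l₂ v d' hchv u hu
              by_cases huT' : u ∈ T
              · exact he.2 (Set.mem_union_right _ huT')
              · exact h1 (Or.inr ⟨hw, huT'⟩)
            by_cases hvy : v = y
            · subst hvy
              have hbl := h0 v hy d' hd'Z (Walk.ofChain v l₂ d' hchv0)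
                (by rw [Walk.IsPath, Walk.support_ofChain]; exact hsufnd) (by simp)
              rw [Walk.blocked_iff] at hbl
              obtain ⟨bs, hmem, hcond⟩ := hbl
              rw [Walk.statuses_ofChain] at hmem
              obtain ⟨u, hu, rfl⟩ := List.mem_map.1 hmem
              rw [statusCond_false] at hcond
              exact hl₂W u hu hcond
            · -- v ≠ y : splice a prefix of p with the chain
              obtain ⟨s', hstat'sub, hsupp'sub, hs'path, hs'E0⟩ :
                  ∃ s' : Walk (G.removeOut (X ∪ T)) y v,
                    (∀ bs ∈ s'.Statuses, bs ∈ as) ∧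
                    (∀ u ∈ s'.support, u ∈ s.support) ∧ s'.IsPath ∧
                    s'.EdgesIn (G.removeOut (X ∪ Z)) := by
                have hvS' : v ∈ s.support := hvS
                rw [Walk.support_eq] at hvS'
                rcases List.mem_cons.1 hvS' with rfl | hvS''
                · exact absurd rfl hvy
                · rcases List.mem_append.1 hvS'' with hvinnerS | hvc₀
                  · -- v ∈ s.inner
                    have hvmap : v ∈ List.map Prod.fst as := by
                      rw [← hsas, ← Walk.inner_eq_statuses]
                      exact hvinnerS
                    obtain ⟨⟨v', sv'⟩, hsv', heqv⟩ := List.mem_map.1 hvmap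
                    simp only at heqv
                    have hsv2 : (v, sv') ∈ as := by rw [← heqv]; exact hsv'
                    have hvinner : v ∈ p.inner := by
                      rw [Walk.inner_eq_statuses]
                      exact List.mem_map.2 ⟨(v, sv'), hasmem _ hsv2, rfl⟩
                    obtain ⟨as₁, as₂, hassplit⟩ := List.append_of_mem hsv2
                    obtain ⟨sv, rest2, hdec2, hnotin2⟩ := p.statuses_takeUntil v hvinner
                    have hsplit2 : p.Statuses = as₁ ++ (v, sv') :: (as₂ ++ (c₀, true) :: rest) := by
                      rw [hsplit, hassplit]
                      simp [List.append_assoc]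
                    have hndmap2 : (((p.takeUntil v hvinner).Statuses ++ (v, sv) :: rest2).map Prod.fst).Nodup := by
                      rw [← hdec2, ← Walk.inner_eq_statuses]
                      exact hinnernd
                    obtain ⟨hseq, _, _⟩ :=
                      split_unique v sv sv' (p.takeUntil v hvinner).Statuses as₁ rest2
                        (as₂ ++ (c₀, true) :: rest) (by rw [← hdec2, hsplit2]) hndmap2
                    refine ⟨p.takeUntil v hvinner, ?_, ?_, p.isPath_takeUntil v hvinner hpath, ?_⟩
                    · intro bs h
                      rw [hseq] at h
                      rw [hassplit]
                      simp [h]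
                    · intro u hu
                      rw [Walk.support_eq] at hu
                      rw [Walk.support_eq]
                      simp only [List.mem_cons, List.mem_append, List.mem_singleton,
                        List.not_mem_nil, or_false] at hu ⊢
                      rcases hu with rfl | hu | rfl
                      · exact Or.inl rfl
                      · refine Or.inr (Or.inl ?_)
                        rw [Walk.inner_eq_statuses, hseq] at hu
                        rw [Walk.inner_eq_statuses, hsas, hassplit]
                        simp only [List.map_append, List.mem_append]
                        exact Or.inl hu
                      · exact Or.inr (Or.inl hvinnerS)
                    · exact Walk.edgesIn_mono (fun a b ha hb h => step_removeOut_mono hsub02 h)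
                        _ (p.edgesIn_takeUntil v hvinner hE2)
                  · -- v = c₀
                    have hvc : v = c₀ := by simpa using hvc₀
                    subst hvc
                    refine ⟨s, ?_, fun u hu => hu, hspath, hEs0⟩
                    rw [hsas]
                    exact fun bs h => h
              -- assemble q
              have hq := (s'.transfer hs'E0).append (Walk.ofChain v l₂ d' hchv0)
              set q := (s'.transfer hs'E0).append (Walk.ofChain v l₂ d' hchv0) with hqdef
              have hqstat : q.Statuses = s'.Statuses ++
                  (v, false) :: l₂.map (fun u => (u, false)) := by
                rw [hqdef, Walk.statuses_append, Walk.statuses_transfer,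
                  Walk.firstArrow_ofChain, Walk.statuses_ofChain, Bool.and_false]
              have hqsupp : q.support = s'.support ++ (l₂ ++ [d']) := by
                rw [Walk.support_eq, Walk.inner_eq_statuses, hqstat,
                  Walk.support_eq (w := s'), Walk.inner_eq_statuses (w := s')]
                simp [List.map_map, Function.comp_def, List.append_assoc]
              have hqpath : q.IsPath := by
                rw [Walk.IsPath, hqsupp]
                refine List.Nodup.append ?_ ?_ ?_
                · exact hs'path
                · exact (List.nodup_cons.1 hsufnd).2
                · intro a ha hamem
                  have haS : a ∈ s.support := hsupp'sub a ha
                  rcases List.mem_append.1 hamem with h | h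
                  · exact hl₂S a h haS
                  · rw [List.mem_singleton] at h
                    subst h
                    exact hd'S haS
              have hbl := h0 y hy d' hd'Z q hqpath (by simp)
              rw [Walk.blocked_iff] at hbl
              obtain ⟨bs, hmem, hcond⟩ := hbl
              rw [hqstat] at hmem
              rcases List.mem_append.1 hmem with hmem | hmem
              · obtain ⟨b, sb⟩ := bs
                have hmem' := hstat'sub _ hmem
                cases sb with
                | false =>
                    rw [statusCond_false] at hcond
                    exact hasopen b hmem' hcond
                | true =>
                    rw [statusCond_true] at hcond
                    obtain ⟨d, h1, h2⟩ := hasgood0 b hmem'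
                    exact hcond d h1 h2
              · rcases List.mem_cons.1 hmem with heq' | hmem
                · subst heq'
                  rw [statusCond_false] at hcond
                  exact hvW hcond
                · obtain ⟨u, hu, rfl⟩ := List.mem_map.1 hmem
                  rw [statusCond_false] at hcond
                  exact hl₂W u hu hcond


end MixedGraph

open MixedGraph in
/-- (Proposition 9.) Let `G` be an ADMG, `Y, Z, W, X` disjoint, `T ⊆ W` and `W₁ = W \ T`.
If `(Y(x,z) ⊥ Z(x,z) | W(x,z))` holds in `G(x,z)`, then
`(Y(x,t) ⊥ T(x,t) | Z(x,t) ∪ W₁(x,t))` holds in `G(x,t)` iff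
`(Y(x,z,t) ⊥ T(x,z,t) | W₁(x,z,t))` holds in `G(x,z,t)`. -/
theorem rule2_conditioning_shift {V : Type} (G : MixedGraph V) (hacyc : G.Acyclic)
    (Y Z W X : Set V)
    (hYZ : Disjoint Y Z) (hYW : Disjoint Y W) (hYX : Disjoint Y X)
    (hZW : Disjoint Z W) (hZX : Disjoint Z X) (hWX : Disjoint W X)
    (T : Set V) (hT : T ⊆ W)
    (hsep : MSepIn (G.swig (X ∪ Z)) (Set.range Sum.inl) (Sum.inl '' Y) (Sum.inl '' Z) (Sum.inl '' W)) :
    MSepIn (G.swig (X ∪ T)) (Set.range Sum.inl) (Sum.inl '' Y) (Sum.inl '' T) (Sum.inl '' (Z ∪ (W \ T))) ↔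
      MSepIn (G.swig (X ∪ Z ∪ T)) (Set.range Sum.inl) (Sum.inl '' Y) (Sum.inl '' T) (Sum.inl '' (W \ T)) := by
  rw [swig_msep_iff G (X ∪ Z) Y Z W] at hsep
  rw [swig_msep_iff G (X ∪ T) Y T (Z ∪ (W \ T)), swig_msep_iff G (X ∪ Z ∪ T) Y T (W \ T)]
  exact core G Y Z W X T hYZ hZW hT hsep
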